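/- Let G be a tree and let v be a vertex of G whose neighborhood is N_G(v) = {v_1, …, v_k, u}, where v_1, …, v_k are leaves of G (k ≥ 1) and u is not a leaf neighbor of v. Let T be the induced subgraph of G on V(G) ∖ ({v, v_1, …, v_k}) and suppose |V(T)| ≥ 2. Then the domination polynomials satisfy D_G(x) = x(x+1)^{k−1}·[D_{G∖L_G(v)}(x) + D_{T∖u}(x)] + x^k·D_T(x), where G∖L_G(v) is the induced subgraph of G on V(G) ∖ {v_1, …, v_k} and T∖u is the induced subgraph on V(T) ∖ {u}. -/

import Mathlib

open scoped Classical

/-- The family of all dominating sets of `G`, as a `Finset` of `Finset`s. -/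
noncomputable def domSets {V : Type*} [Fintype V] (G : SimpleGraph V) :
    Finset (Finset V) :=
  Finset.univ.filter fun S => ∀ v ∉ S, ∃ u ∈ S, G.Adj u v

/-- The average order of a dominating set of `G`. -/
noncomputable def avd {V : Type*} [Fintype V] (G : SimpleGraph V) : ℚ :=
  (∑ S ∈ domSets G, (S.card : ℚ)) / ((domSets G).card : ℚ)

/-- A leaf is a vertex of degree one. -/
noncomputable def IsLeaf {V : Type*} [Fintype V] (G : SimpleGraph V) (v : V) : Prop :=
  G.degree v = 1

/-- The set of leaf neighbors of `w` in `G`. -/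
noncomputable def leafNbrSet {V : Type*} [Fintype V] (G : SimpleGraph V) (w : V) : Set V :=
  {v | G.Adj w v ∧ IsLeaf G v}

/-- A support vertex is a vertex adjacent to at least one leaf. -/
noncomputable def IsSupport {V : Type*} [Fintype V] (G : SimpleGraph V) (w : V) : Prop :=
  ∃ v, G.Adj w v ∧ IsLeaf G v

/-- The domination polynomial of `G`, evaluated at `x`. -/
noncomputable def domPoly {V : Type*} [Fintype V] (G : SimpleGraph V) (x : ℚ) : ℚ :=
  ∑ S ∈ domSets G, x ^ S.card


/-! Split the dominating sets of `G` at `v`. If `v` is taken, each of the `k` leaves is free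
(factor `(x+1)^k`) and the rest must be a subset of `T` dominating `T ∖ u`; call that count `P`.
If `v` is not taken, all leaves are forced (factor `x^k`) and the rest dominates `T`. Splitting
`G ∖ L(v)` at `v` and `P` at `u` in the same way gives `D_{G∖L} = xP + xQ` and
`P = xQ + D_{T∖u}`, where `Q` counts subsets of `T ∖ u` dominating `T ∖ N[u]`; eliminating `Q`
gives the identity. -/

section DominationOn

open SimpleGraph

variable {V : Type*} [Fintype V] (G : SimpleGraph V)

noncomputable def domSetsOn (s t : Set V) : Finset (Finset V) :=
  Finset.univ.filter fun S => ↑S ⊆ s ∧ ∀ w ∈ t, w ∉ S → ∃ z ∈ S, G.Adj z w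

noncomputable def domPolyOn (s t : Set V) (x : ℚ) : ℚ :=
  ∑ S ∈ domSetsOn G s t, x ^ S.card

variable {G}

@[simp]
lemma mem_domSetsOn {s t : Set V} {S : Finset V} :
    S ∈ domSetsOn G s t ↔ ↑S ⊆ s ∧ ∀ w ∈ t, w ∉ S → ∃ z ∈ S, G.Adj z w := by
  simp [domSetsOn]

lemma mem_domSets {S : Finset V} : S ∈ domSets G ↔ ∀ w ∉ S, ∃ z ∈ S, G.Adj z w := by
  simp [domSets]

lemma domPoly_eq_domPolyOn_univ (x : ℚ) : domPoly G x = domPolyOn G Set.univ Set.univ x := by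
  unfold domPoly domPolyOn
  congr 1
  ext S
  simp [domSets]

lemma domPoly_induce_eq_domPolyOn (s : Set V) [Fintype s] (x : ℚ) :
    domPoly (G.induce s) x = domPolyOn G s s x := by
  refine Finset.sum_nbij' (fun S => S.map (Function.Embedding.subtype _))
    (fun S => S.subtype (· ∈ s)) ?_ ?_ ?_ ?_ (fun S _ => by rw [Finset.card_map])
  · intro S hS
    rw [mem_domSets] at hS
    refine mem_domSetsOn.2 ⟨by simp, fun w hw hwS => ?_⟩
    obtain ⟨z, hz, hadj⟩ := hS ⟨w, hw⟩ fun h => hwS (Finset.mem_map_of_mem _ h)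
    exact ⟨z, Finset.mem_map_of_mem _ hz, hadj⟩
  · intro S hS
    obtain ⟨hsub, hdom⟩ := mem_domSetsOn.1 hS
    rw [mem_domSets]
    rintro ⟨w, hw⟩ hwS
    obtain ⟨z, hz, hadj⟩ := hdom w hw fun h => hwS (Finset.mem_subtype.2 h)
    exact ⟨⟨z, hsub hz⟩, Finset.mem_subtype.2 hz, hadj⟩
  · intro S _
    ext a
    simp
  · intro S hS
    ext a
    simpa using fun ha => (mem_domSetsOn.1 hS).1 ha

lemma filter_notMem_domSetsOn {s t : Set V} (w : V) :
    (domSetsOn G s t).filter (w ∉ ·) = domSetsOn G (s \ {w}) t := by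
  ext S
  simp only [Finset.mem_filter, mem_domSetsOn]
  constructor
  · rintro ⟨⟨hsub, hdom⟩, hwS⟩
    exact ⟨fun a ha => ⟨hsub ha, fun h => hwS (h ▸ ha)⟩, hdom⟩
  · rintro ⟨hsub, hdom⟩
    exact ⟨⟨fun a ha => (hsub ha).1, hdom⟩, fun h => (hsub h).2 rfl⟩

lemma sum_filter_mem_domSetsOn {s t : Set V} {w : V} (hw : w ∈ s) (x : ℚ) :
    ∑ S ∈ (domSetsOn G s t).filter (w ∈ ·), x ^ S.card =
      x * domPolyOn G (s \ {w}) (t \ insert w (G.neighborSet w)) x := by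
  rw [domPolyOn, Finset.mul_sum]
  refine Finset.sum_nbij' (fun S => S.erase w) (fun S => insert w S) ?_ ?_ ?_ ?_ ?_
  · intro S hS
    simp only [Finset.mem_filter, mem_domSetsOn] at hS
    obtain ⟨⟨hsub, hdom⟩, hwS⟩ := hS
    refine mem_domSetsOn.2 ⟨fun a ha => ?_, fun y hy hyS => ?_⟩
    · obtain ⟨haw, haS⟩ := Finset.mem_erase.1 ha
      exact ⟨hsub haS, haw⟩
    · simp only [Set.mem_sdiff, Set.mem_insert_iff, mem_neighborSet, not_or] at hy
      obtain ⟨z, hz, hadj⟩ := hdom y hy.1 fun h => hyS (Finset.mem_erase.2 ⟨hy.2.1, h⟩)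
      refine ⟨z, Finset.mem_erase.2 ⟨?_, hz⟩, hadj⟩
      rintro rfl
      exact hy.2.2 hadj
  · intro S hS
    obtain ⟨hsub, hdom⟩ := mem_domSetsOn.1 hS
    simp only [Finset.mem_filter, mem_domSetsOn, Finset.mem_insert_self, and_true]
    refine ⟨fun a ha => ?_, fun y hy hyS => ?_⟩
    · rcases Finset.mem_insert.1 ha with rfl | ha
      · exact hw
      · exact (hsub ha).1
    · by_cases hwy : G.Adj w y
      · exact ⟨w, Finset.mem_insert_self w S, hwy⟩
      have hy' : y ∈ t \ insert w (G.neighborSet w) := by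
        simp only [Set.mem_sdiff, Set.mem_insert_iff, mem_neighborSet, not_or]
        exact ⟨hy, fun h => hyS (h ▸ Finset.mem_insert_self w S), hwy⟩
      obtain ⟨z, hz, hadj⟩ := hdom y hy' fun h => hyS (Finset.mem_insert_of_mem h)
      exact ⟨z, Finset.mem_insert_of_mem hz, hadj⟩
  · intro S hS
    exact Finset.insert_erase (Finset.mem_filter.1 hS).2
  · intro S hS
    exact Finset.erase_insert fun h => ((mem_domSetsOn.1 hS).1 h).2 rfl
  · intro S hS
    rw [← pow_succ', Finset.card_erase_add_one (Finset.mem_filter.1 hS).2]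

/-- Split at `w ∈ s`: if `w` is taken, it dominates its closed neighbourhood. -/
lemma domPolyOn_eq_add {s t : Set V} {w : V} (hw : w ∈ s) (x : ℚ) :
    domPolyOn G s t x =
      x * domPolyOn G (s \ {w}) (t \ insert w (G.neighborSet w)) x +
        domPolyOn G (s \ {w}) t x := by
  rw [domPolyOn, ← Finset.sum_filter_add_sum_filter_not _ (w ∈ ·), sum_filter_mem_domSetsOn hw,
    filter_notMem_domSetsOn]
  rfl

lemma domPolyOn_eq_zero {s t : Set V} {w : V} (hwt : w ∈ t) (hws : w ∉ s)
    (hnbr : ∀ z ∈ s, ¬G.Adj z w) (x : ℚ) : domPolyOn G s t x = 0 := by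
  refine Finset.sum_eq_zero fun S hS => ?_
  obtain ⟨hsub, hdom⟩ := mem_domSetsOn.1 hS
  obtain ⟨z, hz, hadj⟩ := hdom w hwt fun h => hws (hsub h)
  exact (hnbr z (hsub hz) hadj).elim

lemma domPolyOn_eq_pow_mul_of_free {s t : Set V} (A : Finset V) (hAs : ↑A ⊆ s)
    (hAt : ∀ a ∈ A, a ∉ t ∧ ∀ y ∈ t, ¬G.Adj a y) (x : ℚ) :
    domPolyOn G s t x = (x + 1) ^ A.card * domPolyOn G (s \ A) t x := by
  induction A using Finset.induction_on generalizing s with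
  | empty => simp
  | insert w A hwA ih =>
    have hw := hAt w (Finset.mem_insert_self w A)
    have ht : t \ insert w (G.neighborSet w) = t := by
      refine sdiff_eq_left.2 (Set.disjoint_left.2 fun y hyt hy => ?_)
      rcases hy with rfl | hy
      · exact hw.1 hyt
      · exact hw.2 y hyt hy
    rw [domPolyOn_eq_add (hAs (Finset.mem_insert_self w A)), ht,
      ih (s := s \ {w})
        (fun a ha => ⟨hAs (Finset.mem_insert_of_mem ha), fun h => hwA (h ▸ ha)⟩)
        fun a ha => hAt a (Finset.mem_insert_of_mem ha),
      Finset.card_insert_of_notMem hwA, Finset.coe_insert, Set.sdiff_sdiff,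
      Set.singleton_union]
    ring

/-- A vertex with no neighbour in `s` must itself lie in every subset of `s` dominating it. -/
lemma domPolyOn_eq_pow_mul_of_forced {s t : Set V} (A : Finset V) (hAs : ↑A ⊆ s)
    (hAt : ↑A ⊆ t) (hnbr : ∀ a ∈ A, ∀ z ∈ s, ¬G.Adj z a) (x : ℚ) :
    domPolyOn G s t x =
      x ^ A.card * domPolyOn G (s \ A) {y ∈ t \ A | ∀ a ∈ A, ¬G.Adj a y} x := by
  induction A using Finset.induction_on generalizing s t with
  | empty => simp
  | insert w A hwA ih =>
    have hws := hAs (Finset.mem_insert_self w A)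
    have hw := hnbr w (Finset.mem_insert_self w A)
    rw [domPolyOn_eq_add hws, domPolyOn_eq_zero (hAt (Finset.mem_insert_self w A))
        (fun h => h.2 rfl) (fun z hz => hw z hz.1), add_zero,
      ih (s := s \ {w}) (t := t \ insert w (G.neighborSet w))
        (fun a ha => ⟨hAs (Finset.mem_insert_of_mem ha), fun h => hwA (h ▸ ha)⟩)
        (fun a ha => ⟨hAt (Finset.mem_insert_of_mem ha), ?_⟩)
        fun a ha z hz => hnbr a (Finset.mem_insert_of_mem ha) z hz.1,
      Finset.card_insert_of_notMem hwA, pow_succ', mul_assoc]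
    · congr 3
      · rw [Finset.coe_insert, Set.sdiff_sdiff, Set.singleton_union]
      · ext y
        simp only [Set.mem_sdiff, Set.mem_insert_iff, mem_neighborSet, Set.mem_ofPred_eq,
          Finset.coe_insert, Finset.mem_coe, Finset.mem_insert, forall_eq_or_imp, not_or]
        tauto
    · simp only [Set.mem_insert_iff, mem_neighborSet, not_or]
      exact ⟨fun h => hwA (h ▸ ha), fun h => hnbr a (Finset.mem_insert_of_mem ha) w hws h⟩

lemma IsLeaf.eq_of_adj {a y z : V} (h : IsLeaf G a) (hy : G.Adj a y) (hz : G.Adj a z) :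
    y = z :=
  Finset.card_le_one.1 h.le y (by simpa using hy) z (by simpa using hz)

section PendantBranch

variable {L : Finset V} {v u : V}

lemma domPolyOn_univ_of_pendant (hleaf : ∀ a ∈ L, ∀ z, G.Adj a z → z = v)
    (hnbr : ∀ w, G.Adj v w ↔ w ∈ L ∨ w = u) (hL : L.Nonempty) (x : ℚ) :
    domPolyOn G Set.univ Set.univ x =
      x * (x + 1) ^ L.card * domPolyOn G (↑L ∪ {v})ᶜ (↑L ∪ {v, u})ᶜ x +
        x ^ L.card * domPolyOn G (↑L ∪ {v})ᶜ (↑L ∪ {v})ᶜ x := by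
  have hvL : v ∉ L := fun h => G.irrefl ((hnbr v).2 (Or.inl h))
  have hLs : ↑L ⊆ (Set.univ \ {v} : Set V) := fun a ha => ⟨trivial, fun h => hvL (h ▸ ha)⟩
  have hs : ((Set.univ \ {v}) \ ↑L : Set V) = (↑L ∪ {v})ᶜ := by ext; simp
  have ht : Set.univ \ insert v (G.neighborSet v) = (↑L ∪ {v, u})ᶜ := by
    ext; grind [mem_neighborSet]
  have hdom : {y ∈ (Set.univ \ ↑L : Set V) | ∀ a ∈ L, ¬G.Adj a y} = (↑L ∪ {v})ᶜ := by
    ext y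
    obtain ⟨a, ha⟩ := hL
    simp only [Set.mem_sdiff, Set.mem_univ, true_and, Finset.mem_coe, Set.mem_ofPred_eq,
      Set.mem_compl_iff, Set.mem_union, Set.mem_singleton_iff, not_or]
    refine and_congr_right fun _ => ⟨fun h hyv => h a ha (hyv ▸ ((hnbr a).2 (Or.inl ha)).symm),
      fun hyv b hb hby => hyv (hleaf b hb y hby)⟩
  rw [domPolyOn_eq_add (Set.mem_univ v), ht,
    domPolyOn_eq_pow_mul_of_free (t := (↑L ∪ {v, u})ᶜ) L hLs
      (fun a ha => ⟨fun h => h (Or.inl ha),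
        fun y hy hay => hy (Or.inr (Or.inl (hleaf a ha y hay)))⟩),
    domPolyOn_eq_pow_mul_of_forced L hLs (Set.subset_univ _)
      (fun a ha z hz hza => hz.2 (hleaf a ha z hza.symm)), hs, hdom]
  ring

lemma domPolyOn_compl_of_pendant (hnbr : ∀ w, G.Adj v w ↔ w ∈ L ∨ w = u) (hu : u ∉ L)
    (x : ℚ) :
    domPolyOn G (↑L)ᶜ (↑L)ᶜ x =
      x * domPolyOn G (↑L ∪ {v})ᶜ (↑L ∪ {v, u})ᶜ x +
        x * domPolyOn G (↑L ∪ {v, u})ᶜ (↑L ∪ insert u (G.neighborSet u))ᶜ x := by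
  have hvL : v ∉ L := fun h => G.irrefl ((hnbr v).2 (Or.inl h))
  have huv : u ≠ v := (G.ne_of_adj ((hnbr u).2 (Or.inr rfl))).symm
  have hT : (↑L)ᶜ \ {v} = (↑L ∪ {v} : Set V)ᶜ := by ext; grind
  have hTu : (↑L ∪ {v} : Set V)ᶜ \ {u} = (↑L ∪ {v, u})ᶜ := by ext; grind
  have hNv : (↑L)ᶜ \ insert v (G.neighborSet v) = (↑L ∪ {v, u})ᶜ := by
    ext; grind [mem_neighborSet]
  have hNu : (↑L)ᶜ \ insert u (G.neighborSet u) = (↑L ∪ insert u (G.neighborSet u))ᶜ := by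
    ext; grind
  rw [domPolyOn_eq_add (by simpa using hvL), hT, hNv,
    domPolyOn_eq_add (t := (↑L)ᶜ) (w := u) (by simp [hu, huv]), hTu, hNu,
    domPolyOn_eq_zero (s := (↑L ∪ {v, u})ᶜ) (t := (↑L)ᶜ) (w := v) (by simpa using hvL)
      (by simp) ?_, add_zero]
  intro z hz hzv
  rcases (hnbr z).1 hzv.symm with h | rfl
  · exact hz (Or.inl h)
  · exact hz (Or.inr (Or.inr rfl))

lemma domPolyOn_branch_of_pendant (hnbr : ∀ w, G.Adj v w ↔ w ∈ L ∨ w = u) (hu : u ∉ L)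
    (x : ℚ) :
    domPolyOn G (↑L ∪ {v})ᶜ (↑L ∪ {v, u})ᶜ x =
      x * domPolyOn G (↑L ∪ {v, u})ᶜ (↑L ∪ insert u (G.neighborSet u))ᶜ x +
        domPolyOn G (↑L ∪ {v, u})ᶜ (↑L ∪ {v, u})ᶜ x := by
  have hvu : G.Adj v u := (hnbr u).2 (Or.inr rfl)
  have hTu : (↑L ∪ {v} : Set V)ᶜ \ {u} = (↑L ∪ {v, u})ᶜ := by ext; grind
  have hNu : (↑L ∪ {v, u} : Set V)ᶜ \ insert u (G.neighborSet u) =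
      (↑L ∪ insert u (G.neighborSet u))ᶜ := by
    ext; grind [mem_neighborSet, hvu.symm]
  rw [domPolyOn_eq_add (w := u) (by simp [hu, hvu.ne.symm]), hTu, hNu]

end PendantBranch

end DominationOn

theorem domPoly_leaf_branch_general {V : Type*} [Fintype V] (G : SimpleGraph V)
    (v u : V) (k : ℕ) (hk : 1 ≤ k)
    (hcard : (leafNbrSet G v).ncard = k)
    (hu : u ∉ leafNbrSet G v)
    (hnbr : G.neighborSet v = leafNbrSet G v ∪ {u}) (x : ℚ) :
    domPoly G x =
      x * (x + 1) ^ (k - 1) *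
          (domPoly (G.induce ((leafNbrSet G v)ᶜ)) x +
            domPoly (G.induce ((leafNbrSet G v ∪ {v, u})ᶜ)) x) +
        x ^ k * domPoly (G.induce ((leafNbrSet G v ∪ {v})ᶜ)) x := by
  rw [domPoly_eq_domPolyOn_univ, domPoly_induce_eq_domPolyOn, domPoly_induce_eq_domPolyOn,
    domPoly_induce_eq_domPolyOn]
  set L := (leafNbrSet G v).toFinset
  have hL : leafNbrSet G v = ↑L := (Set.coe_toFinset _).symm
  rw [hL] at hcard hu hnbr ⊢
  rw [Set.ncard_coe_finset] at hcard
  subst hcard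
  have hleaf : ∀ a ∈ L, ∀ z, G.Adj a z → z = v := fun a ha z hz => by
    rw [Set.mem_toFinset] at ha
    exact ha.2.eq_of_adj hz ha.1.symm
  have hadj : ∀ w, G.Adj v w ↔ w ∈ L ∨ w = u := fun w => by
    rw [← SimpleGraph.mem_neighborSet, hnbr]; simp [or_comm]
  obtain ⟨j, hj⟩ := Nat.exists_eq_add_of_le' hk
  rw [domPolyOn_univ_of_pendant hleaf hadj (Finset.card_pos.1 (by omega)),
    domPolyOn_compl_of_pendant hadj hu, hj, Nat.add_sub_cancel]
  linear_combination x * (x + 1) ^ j * domPolyOn_branch_of_pendant hadj hu x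

/-- Let `G` be a tree and `v` a vertex whose neighborhood consists of `k ≥ 1` leaves
together with one non-leaf neighbor `u`, and let `T = G ∖ (L_G(v) ∪ {v})` have at least
two vertices.  Then
`D_G(x) = x(x+1)^{k−1}·[D_{G∖L_G(v)}(x) + D_{T∖u}(x)] + x^k·D_T(x)`. -/
theorem domPoly_leaf_branch {V : Type*} [Fintype V] (G : SimpleGraph V)
    (htree : G.IsTree) (v u : V) (k : ℕ) (hk : 1 ≤ k)
    (hcard : (leafNbrSet G v).ncard = k)
    (hu : u ∉ leafNbrSet G v)
    (hnbr : G.neighborSet v = leafNbrSet G v ∪ {u})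
    (hT : 2 ≤ ((leafNbrSet G v ∪ {v})ᶜ : Set V).ncard) (x : ℚ) :
    domPoly G x =
      x * (x + 1) ^ (k - 1) *
          (domPoly (G.induce ((leafNbrSet G v)ᶜ)) x +
            domPoly (G.induce ((leafNbrSet G v ∪ {v, u})ᶜ)) x) +
        x ^ k * domPoly (G.induce ((leafNbrSet G v ∪ {v})ᶜ)) x :=
  domPoly_leaf_branch_general G v u k hk hcard hu hnbr x
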